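/- Let O be a discrete valuation ring with fraction field K, maximal ideal m, residue field k = O/m, and reduction map x ↦ x̃. Let A, B ∈ O[X,Y] be binary quadratic forms with Res(A,B) ∈ O^×. Let P₁ = (α₁, β₁) and P₂ = (α₂, β₂) be elements of O² with α₂β₁ − α₁β₂ ∈ O^×. Assume: (i) P₁ and P₂ form a projective 2-cycle of φ = (A : B), i.e. there exist s₁, s₂ ∈ K^× with (A(α₁,β₁), B(α₁,β₁)) = s₁·(α₂, β₂) and (A(α₂,β₂), B(α₂,β₂)) = s₂·(α₁, β₁); and (ii) the reduction modulo m of the binary quadratic form β₂A − α₂B (which vanishes at P₁) is not divisible by (β̃₁X − α̃₁Y)², and the reduction of β₁A − α₁B (which vanishes at P₂) is not divisible by (β̃₂X − α̃₂Y)² in k[X,Y] (i.e., the reduced points form an unramified 2-cycle of the reduced map). Let M be the matrix with columns P₁, P₂ and define forms (C, D) = M^{-1} ∘ (A, B) ∘ M. Then there exist u ∈ K^× and a, b, c ∈ O^× with b(b − ac) ∈ O^× such that C(X,Y) = u·(aXY + bY²) and D(X,Y) = u·(X² + cXY). -/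

import Mathlib

open IsLocalRing MvPolynomial

/-- The value of the binary quadratic form `p·X² + q·XY + r·Y²` at the point `(x, y)`. -/
def qform {R : Type*} [CommRing R] (p q r x y : R) : R :=
  p * x ^ 2 + q * x * y + r * y ^ 2

/-- The binary quadratic form `p·X² + q·XY + r·Y²` as a polynomial in two variables. -/
noncomputable def bqf {k : Type*} [CommRing k] (p q r : k) : MvPolynomial (Fin 2) k :=
  C p * X 0 ^ 2 + C q * X 0 * X 1 + C r * X 1 ^ 2


set_option maxHeartbeats 1000000

private theorem det4 {R : Type*} [CommRing R]
    (m00 m01 m02 m03 m10 m11 m12 m13 m20 m21 m22 m23 m30 m31 m32 m33 : R) :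
    Matrix.det !![m00,m01,m02,m03; m10,m11,m12,m13; m20,m21,m22,m23; m30,m31,m32,m33]
    = m00*(m11*(m22*m33-m23*m32) - m12*(m21*m33-m23*m31) + m13*(m21*m32-m22*m31))
    - m01*(m10*(m22*m33-m23*m32) - m12*(m20*m33-m23*m30) + m13*(m20*m32-m22*m30))
    + m02*(m10*(m21*m33-m23*m31) - m11*(m20*m33-m23*m30) + m13*(m20*m31-m21*m30))
    - m03*(m10*(m21*m32-m22*m31) - m11*(m20*m32-m22*m30) + m12*(m20*m31-m21*m30)) := by
  simp [Matrix.det_succ_row_zero, Fin.sum_univ_succ, Fin.succAbove]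
  ring

/-- Resultant of a pair of binary quadratic forms after a linear substitution. -/
private theorem res_subst {R : Type*} [CommRing R] (c0 c1 c2 d0 d1 d2 p q r s : R) :
    Matrix.det !![c0*p^2 + c1*(p*q) + c2*q^2,
        2*(c0*(p*r)) + c1*(p*s + r*q) + 2*(c2*(q*s)),
        c0*r^2 + c1*(r*s) + c2*s^2, 0;
        0, c0*p^2 + c1*(p*q) + c2*q^2,
        2*(c0*(p*r)) + c1*(p*s + r*q) + 2*(c2*(q*s)),
        c0*r^2 + c1*(r*s) + c2*s^2;
        d0*p^2 + d1*(p*q) + d2*q^2,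
        2*(d0*(p*r)) + d1*(p*s + r*q) + 2*(d2*(q*s)),
        d0*r^2 + d1*(r*s) + d2*s^2, 0;
        0, d0*p^2 + d1*(p*q) + d2*q^2,
        2*(d0*(p*r)) + d1*(p*s + r*q) + 2*(d2*(q*s)),
        d0*r^2 + d1*(r*s) + d2*s^2]
    = (p*s - r*q)^4 *
      Matrix.det !![c0, c1, c2, 0; 0, c0, c1, c2; d0, d1, d2, 0; 0, d0, d1, d2] := by
  rw [det4, det4]
  ring

/-- Resultant of a pair of linear combinations of two binary quadratic forms. -/
private theorem res_lin {R : Type*} [CommRing R] (a0 a1 a2 b0 b1 b2 p q r s : R) :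
    Matrix.det !![p*a0 - q*b0, p*a1 - q*b1, p*a2 - q*b2, 0;
        0, p*a0 - q*b0, p*a1 - q*b1, p*a2 - q*b2;
        r*b0 - s*a0, r*b1 - s*a1, r*b2 - s*a2, 0;
        0, r*b0 - s*a0, r*b1 - s*a1, r*b2 - s*a2]
    = (p*r - q*s)^2 *
      Matrix.det !![a0, a1, a2, 0; 0, a0, a1, a2; b0, b1, b2, 0; 0, b0, b1, b2] := by
  rw [det4, det4]
  ring

private theorem det4_zero {R : Type*} [CommRing R] (f1 e2 e1 f2 : R) :
    Matrix.det !![(0:R), f1, e2, 0; 0, 0, f1, e2; e1, f2, 0, 0; 0, e1, f2, 0]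
    = e1*e2*(e1*e2 - f1*f2) := by
  rw [det4]; ring

/-- Let `O` be a DVR with fraction field `K` and residue map
`residue O`.  Let `A = a0X² + a1XY + a2Y²`, `B = b0X² + b1XY + b2Y²` be binary
quadratic forms over `O` with `Res(A,B) ∈ O^×`, and let `P₁ = (α₁, β₁)`,
`P₂ = (α₂, β₂) ∈ O²` with `α₂β₁ − α₁β₂ ∈ O^×` form a projective 2-cycle of
`φ = (A : B)` whose reduction is an unramified 2-cycle of the reduced map.  If `M`
is the matrix with columns `P₁, P₂` and `(C, D) = M⁻¹ ∘ (A, B) ∘ M`, then there are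
`u ∈ K^×` and `a, b, c ∈ O^×` with `b(b − ac) ∈ O^×` such that
`C = u·(aXY + bY²)` and `D = u·(X² + cXY)`. -/
theorem good_reduction_local_normal_form_two_cycle
    (O : Type*) [CommRing O] [IsDomain O] [IsDiscreteValuationRing O]
    (K : Type*) [Field K] [Algebra O K] [IsFractionRing O K]
    (a0 a1 a2 b0 b1 b2 : O)
    (hres : IsUnit (Matrix.det
      !![a0, a1, a2, 0; 0, a0, a1, a2; b0, b1, b2, 0; 0, b0, b1, b2]))
    (α₁ β₁ α₂ β₂ : O)
    (hM : IsUnit (α₂ * β₁ - α₁ * β₂))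
    -- (i) `P₁` and `P₂` form a projective 2-cycle of `φ = (A : B)`
    (hcyc : ∃ s₁ s₂ : K, s₁ ≠ 0 ∧ s₂ ≠ 0 ∧
      algebraMap O K (qform a0 a1 a2 α₁ β₁) = s₁ * algebraMap O K α₂ ∧
      algebraMap O K (qform b0 b1 b2 α₁ β₁) = s₁ * algebraMap O K β₂ ∧
      algebraMap O K (qform a0 a1 a2 α₂ β₂) = s₂ * algebraMap O K α₁ ∧
      algebraMap O K (qform b0 b1 b2 α₂ β₂) = s₂ * algebraMap O K β₁)
    -- (ii) the reduced points form an unramified 2-cycle of the reduced map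
    (hunr1 : ¬ ((C (residue O β₁) * X 0 - C (residue O α₁) * X 1) ^ 2 ∣
      bqf (residue O (β₂ * a0 - α₂ * b0)) (residue O (β₂ * a1 - α₂ * b1))
        (residue O (β₂ * a2 - α₂ * b2))))
    (hunr2 : ¬ ((C (residue O β₂) * X 0 - C (residue O α₂) * X 1) ^ 2 ∣
      bqf (residue O (β₁ * a0 - α₁ * b0)) (residue O (β₁ * a1 - α₁ * b1))
        (residue O (β₁ * a2 - α₁ * b2)))) :
    ∃ u : K, u ≠ 0 ∧ ∃ a b c : O, IsUnit a ∧ IsUnit b ∧ IsUnit c ∧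
      IsUnit (b * (b - a * c)) ∧
      ∀ x y : K,
        (algebraMap O K β₂ *
            qform (algebraMap O K a0) (algebraMap O K a1) (algebraMap O K a2)
              (algebraMap O K α₁ * x + algebraMap O K α₂ * y)
              (algebraMap O K β₁ * x + algebraMap O K β₂ * y)
          - algebraMap O K α₂ *
            qform (algebraMap O K b0) (algebraMap O K b1) (algebraMap O K b2)
              (algebraMap O K α₁ * x + algebraMap O K α₂ * y)
              (algebraMap O K β₁ * x + algebraMap O K β₂ * y))
          / algebraMap O K (α₁ * β₂ - α₂ * β₁)
          = u * (algebraMap O K a * x * y + algebraMap O K b * y ^ 2) ∧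
        (algebraMap O K α₁ *
            qform (algebraMap O K b0) (algebraMap O K b1) (algebraMap O K b2)
              (algebraMap O K α₁ * x + algebraMap O K α₂ * y)
              (algebraMap O K β₁ * x + algebraMap O K β₂ * y)
          - algebraMap O K β₁ *
            qform (algebraMap O K a0) (algebraMap O K a1) (algebraMap O K a2)
              (algebraMap O K α₁ * x + algebraMap O K α₂ * y)
              (algebraMap O K β₁ * x + algebraMap O K β₂ * y))
          / algebraMap O K (α₁ * β₂ - α₂ * β₁)
          = u * (x ^ 2 + algebraMap O K c * x * y) := by
  obtain ⟨s₁, s₂, hs₁, hs₂, h1, h2, h3, h4⟩ := hcyc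
  have hinj : Function.Injective (algebraMap O K) := IsFractionRing.injective O K
  simp only [qform, map_add, map_mul, map_pow] at h1 h2 h3 h4
  -- the two "fixed point" coefficients vanish
  have hg1 : (β₂ * a0 - α₂ * b0) * α₁ ^ 2 + (β₂ * a1 - α₂ * b1) * (α₁ * β₁) + (β₂ * a2 - α₂ * b2) * β₁ ^ 2 = 0 := by
    apply hinj
    simp only [map_add, map_sub, map_mul, map_pow, map_zero, map_ofNat]
    linear_combination algebraMap O K β₂ * h1 - algebraMap O K α₂ * h2
  have hg2 : (α₁ * b0 - β₁ * a0) * α₂ ^ 2 + (α₁ * b1 - β₁ * a1) * (α₂ * β₂) + (α₁ * b2 - β₁ * a2) * β₂ ^ 2 = 0 := by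
    apply hinj
    simp only [map_add, map_sub, map_mul, map_pow, map_zero, map_ofNat]
    linear_combination algebraMap O K α₁ * h4 - algebraMap O K β₁ * h3
  -- determinant bookkeeping
  have hδ1 : IsUnit (α₁ * β₂ - α₂ * β₁) := by
    have h := hM.neg
    rwa [show -(α₂ * β₁ - α₁ * β₂) = α₁ * β₂ - α₂ * β₁ by ring] at h
  have hδ2 : IsUnit (β₂ * α₁ - α₂ * β₁) := by
    rwa [show β₂ * α₁ - α₂ * β₁ = α₁ * β₂ - α₂ * β₁ by ring]
  have hdetA := res_subst (β₂ * a0 - α₂ * b0) (β₂ * a1 - α₂ * b1) (β₂ * a2 - α₂ * b2)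
    (α₁ * b0 - β₁ * a0) (α₁ * b1 - β₁ * a1) (α₁ * b2 - β₁ * a2) α₁ β₁ α₂ β₂
  rw [hg1, hg2, det4_zero, res_lin] at hdetA
  have hU : IsUnit (((α₁ * b0 - β₁ * a0) * α₁ ^ 2 + (α₁ * b1 - β₁ * a1) * (α₁ * β₁) + (α₁ * b2 - β₁ * a2) * β₁ ^ 2) * ((β₂ * a0 - α₂ * b0) * α₂ ^ 2 + (β₂ * a1 - α₂ * b1) * (α₂ * β₂) + (β₂ * a2 - α₂ * b2) * β₂ ^ 2) * (((α₁ * b0 - β₁ * a0) * α₁ ^ 2 + (α₁ * b1 - β₁ * a1) * (α₁ * β₁) + (α₁ * b2 - β₁ * a2) * β₁ ^ 2) * ((β₂ * a0 - α₂ * b0) * α₂ ^ 2 + (β₂ * a1 - α₂ * b1) * (α₂ * β₂) + (β₂ * a2 - α₂ * b2) * β₂ ^ 2) - (2 * ((β₂ * a0 - α₂ * b0) * (α₁ * α₂)) + (β₂ * a1 - α₂ * b1) * (α₁ * β₂ + α₂ * β₁) + 2 * ((β₂ * a2 - α₂ * b2) * (β₁ * β₂))) * (2 * ((α₁ * b0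 - β₁ * a0) * (α₁ * α₂)) + (α₁ * b1 - β₁ * a1) * (α₁ * β₂ + α₂ * β₁) + 2 * ((α₁ * b2 - β₁ * a2) * (β₁ * β₂))))) := by
    rw [hdetA]
    exact (hδ1.pow 4).mul ((hδ2.pow 2).mul hres)
  have hE12 := isUnit_of_mul_isUnit_left hU
  have hE1 := isUnit_of_mul_isUnit_left hE12
  have hE2 := isUnit_of_mul_isUnit_right hE12
  have hQ := isUnit_of_mul_isUnit_right hU
  -- residue field data
  obtain ⟨v, hv⟩ := (hδ1.map (residue O)).exists_right_inv
  simp only [map_sub, map_mul] at hv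
  have hg1k := congrArg (residue O) hg1
  have hg2k := congrArg (residue O) hg2
  simp only [map_add, map_sub, map_mul, map_pow, map_zero, map_ofNat] at hg1k hg2k
  -- f1 is a unit (unramifiedness at P₁)
  have hF1 : IsUnit (2 * ((β₂ * a0 - α₂ * b0) * (α₁ * α₂)) + (β₂ * a1 - α₂ * b1) * (α₁ * β₂ + α₂ * β₁) + 2 * ((β₂ * a2 - α₂ * b2) * (β₁ * β₂))) := by
    by_contra hn
    have hf1k : residue O (2 * ((β₂ * a0 - α₂ * b0) * (α₁ * α₂)) + (β₂ * a1 - α₂ * b1) * (α₁ * β₂ + α₂ * β₁) + 2 * ((β₂ * a2 - α₂ * b2) * (β₁ * β₂))) = 0 := by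
      by_contra h0
      exact hn ((IsLocalRing.residue_ne_zero_iff_isUnit _).mp h0)
    simp only [map_add, map_sub, map_mul, map_pow, map_zero, map_ofNat] at hf1k
    refine hunr1 ⟨C (residue O ((β₂ * a0 - α₂ * b0) * α₂ ^ 2 + (β₂ * a1 - α₂ * b1) * (α₂ * β₂) + (β₂ * a2 - α₂ * b2) * β₂ ^ 2) * (v * v)), ?_⟩
    have hp0 : residue O (β₂ * a0 - α₂ * b0)
        = residue O ((β₂ * a0 - α₂ * b0) * α₂ ^ 2 + (β₂ * a1 - α₂ * b1) * (α₂ * β₂) + (β₂ * a2 - α₂ * b2) * β₂ ^ 2) * (v * v) * (residue O β₁ * residue O β₁) := by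
      simp only [map_add, map_sub, map_mul, map_pow, map_zero, map_ofNat]
      linear_combination (-((residue O β₂ * residue O a0 - residue O α₂ * residue O b0) * (1 + (residue O α₁ * residue O β₂ - residue O α₂ * residue O β₁) * v))) * hv
        + (v ^ 2 * residue O β₂ ^ 2) * hg1k + (-(v ^ 2) * residue O β₁ * residue O β₂) * hf1k
    have hq0 : residue O (β₂ * a1 - α₂ * b1)
        = residue O ((β₂ * a0 - α₂ * b0) * α₂ ^ 2 + (β₂ * a1 - α₂ * b1) * (α₂ * β₂) + (β₂ * a2 - α₂ * b2) * β₂ ^ 2) * (v * v) * (-2 * (residue O α₁ * residue O β₁)) := by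
      simp only [map_add, map_sub, map_mul, map_pow, map_zero, map_ofNat]
      linear_combination (-((residue O β₂ * residue O a1 - residue O α₂ * residue O b1) * (1 + (residue O α₁ * residue O β₂ - residue O α₂ * residue O β₁) * v))) * hv
        + (-2 * v ^ 2 * residue O α₂ * residue O β₂) * hg1k + (v ^ 2 * (residue O α₁ * residue O β₂ + residue O α₂ * residue O β₁)) * hf1k
    have hr0 : residue O (β₂ * a2 - α₂ * b2)
        = residue O ((β₂ * a0 - α₂ * b0) * α₂ ^ 2 + (β₂ * a1 - α₂ * b1) * (α₂ * β₂) + (β₂ * a2 - α₂ * b2) * β₂ ^ 2) * (v * v) * (residue O α₁ * residue O α₁) := by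
      simp only [map_add, map_sub, map_mul, map_pow, map_zero, map_ofNat]
      linear_combination (-((residue O β₂ * residue O a2 - residue O α₂ * residue O b2) * (1 + (residue O α₁ * residue O β₂ - residue O α₂ * residue O β₁) * v))) * hv
        + (v ^ 2 * residue O α₂ ^ 2) * hg1k + (-(v ^ 2) * residue O α₁ * residue O α₂) * hf1k
    rw [bqf, hp0, hq0, hr0]
    simp only [map_add, map_sub, map_mul, map_neg, map_pow, map_ofNat]
    ring
  -- f2 is a unit (unramifiedness at P₂)
  have hF2 : IsUnit (2 * ((α₁ * b0 - β₁ * a0) * (α₁ * α₂)) + (α₁ * b1 - β₁ * a1) * (α₁ * β₂ + α₂ * β₁) + 2 * ((α₁ * b2 - β₁ * a2) * (β₁ * β₂))) := by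
    by_contra hn
    have hf2k : residue O (2 * ((α₁ * b0 - β₁ * a0) * (α₁ * α₂)) + (α₁ * b1 - β₁ * a1) * (α₁ * β₂ + α₂ * β₁) + 2 * ((α₁ * b2 - β₁ * a2) * (β₁ * β₂))) = 0 := by
      by_contra h0
      exact hn ((IsLocalRing.residue_ne_zero_iff_isUnit _).mp h0)
    simp only [map_add, map_sub, map_mul, map_pow, map_zero, map_ofNat] at hf2k
    refine hunr2 ⟨C (-(residue O ((α₁ * b0 - β₁ * a0) * α₁ ^ 2 + (α₁ * b1 - β₁ * a1) * (α₁ * β₁) + (α₁ * b2 - β₁ * a2) * β₁ ^ 2) * (v * v))), ?_⟩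
    have hp0 : residue O (β₁ * a0 - α₁ * b0)
        = -(residue O ((α₁ * b0 - β₁ * a0) * α₁ ^ 2 + (α₁ * b1 - β₁ * a1) * (α₁ * β₁) + (α₁ * b2 - β₁ * a2) * β₁ ^ 2) * (v * v)) * (residue O β₂ * residue O β₂) := by
      simp only [map_add, map_sub, map_mul, map_pow, map_zero, map_ofNat]
      linear_combination (-((residue O β₁ * residue O a0 - residue O α₁ * residue O b0) * (1 + (residue O α₁ * residue O β₂ - residue O α₂ * residue O β₁) * v))) * hv
        + (v ^ 2 * residue O β₁ * residue O β₂) * hf2k + (-(v ^ 2) * residue O β₁ ^ 2) * hg2k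
    have hq0 : residue O (β₁ * a1 - α₁ * b1)
        = -(residue O ((α₁ * b0 - β₁ * a0) * α₁ ^ 2 + (α₁ * b1 - β₁ * a1) * (α₁ * β₁) + (α₁ * b2 - β₁ * a2) * β₁ ^ 2) * (v * v)) * (-2 * (residue O α₂ * residue O β₂)) := by
      simp only [map_add, map_sub, map_mul, map_pow, map_zero, map_ofNat]
      linear_combination (-((residue O β₁ * residue O a1 - residue O α₁ * residue O b1) * (1 + (residue O α₁ * residue O β₂ - residue O α₂ * residue O β₁) * v))) * hv
        + (-(v ^ 2) * (residue O α₁ * residue O β₂ + residue O α₂ * residue O β₁)) * hf2k + (2 * v ^ 2 * residue O α₁ * residue O β₁) * hg2k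
    have hr0 : residue O (β₁ * a2 - α₁ * b2)
        = -(residue O ((α₁ * b0 - β₁ * a0) * α₁ ^ 2 + (α₁ * b1 - β₁ * a1) * (α₁ * β₁) + (α₁ * b2 - β₁ * a2) * β₁ ^ 2) * (v * v)) * (residue O α₂ * residue O α₂) := by
      simp only [map_add, map_sub, map_mul, map_pow, map_zero, map_ofNat]
      linear_combination (-((residue O β₁ * residue O a2 - residue O α₁ * residue O b2) * (1 + (residue O α₁ * residue O β₂ - residue O α₂ * residue O β₁) * v))) * hv
        + (v ^ 2 * residue O α₁ * residue O α₂) * hf2k + (-(v ^ 2) * residue O α₁ ^ 2) * hg2k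
    rw [bqf, hp0, hq0, hr0]
    simp only [map_add, map_sub, map_mul, map_neg, map_pow, map_ofNat]
    ring
  -- assemble the answer
  obtain ⟨ε, hε⟩ := hE1.exists_right_inv
  have hεu : IsUnit ε := IsUnit.of_mul_eq_one (a := ε) _ (by rw [mul_comm]; exact hε)
  have hd0 : algebraMap O K (α₁ * β₂ - α₂ * β₁) ≠ 0 :=
    (map_ne_zero_iff _ hinj).mpr hδ1.ne_zero
  have hεK : algebraMap O K ((α₁ * b0 - β₁ * a0) * α₁ ^ 2 + (α₁ * b1 - β₁ * a1) * (α₁ * β₁) + (α₁ * b2 - β₁ * a2) * β₁ ^ 2) * algebraMap O K ε = 1 := by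
    rw [← map_mul, hε, map_one]
  have hinvK : algebraMap O K (α₁ * β₂ - α₂ * β₁)
      * (algebraMap O K (α₁ * β₂ - α₂ * β₁))⁻¹ = 1 := mul_inv_cancel₀ hd0
  refine ⟨algebraMap O K ((α₁ * b0 - β₁ * a0) * α₁ ^ 2 + (α₁ * b1 - β₁ * a1) * (α₁ * β₁) + (α₁ * b2 - β₁ * a2) * β₁ ^ 2) * (algebraMap O K (α₁ * β₂ - α₂ * β₁))⁻¹,
    mul_ne_zero ((map_ne_zero_iff _ hinj).mpr hE1.ne_zero) (inv_ne_zero hd0),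
    (2 * ((β₂ * a0 - α₂ * b0) * (α₁ * α₂)) + (β₂ * a1 - α₂ * b1) * (α₁ * β₂ + α₂ * β₁) + 2 * ((β₂ * a2 - α₂ * b2) * (β₁ * β₂))) * ε, ((β₂ * a0 - α₂ * b0) * α₂ ^ 2 + (β₂ * a1 - α₂ * b1) * (α₂ * β₂) + (β₂ * a2 - α₂ * b2) * β₂ ^ 2) * ε, (2 * ((α₁ * b0 - β₁ * a0) * (α₁ * α₂)) + (α₁ * b1 - β₁ * a1) * (α₁ * β₂ + α₂ * β₁) + 2 * ((α₁ * b2 - β₁ * a2) * (β₁ * β₂))) * ε, hF1.mul hεu, hE2.mul hεu, hF2.mul hεu, ?_, ?_⟩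
  · have hb : (((β₂ * a0 - α₂ * b0) * α₂ ^ 2 + (β₂ * a1 - α₂ * b1) * (α₂ * β₂) + (β₂ * a2 - α₂ * b2) * β₂ ^ 2) * ε) * (((β₂ * a0 - α₂ * b0) * α₂ ^ 2 + (β₂ * a1 - α₂ * b1) * (α₂ * β₂) + (β₂ * a2 - α₂ * b2) * β₂ ^ 2) * ε - (2 * ((β₂ * a0 - α₂ * b0) * (α₁ * α₂)) + (β₂ * a1 - α₂ * b1) * (α₁ * β₂ + α₂ * β₁) + 2 * ((β₂ * a2 - α₂ * b2) * (β₁ * β₂))) * ε * ((2 * ((α₁ * b0 - β₁ * a0) * (α₁ * α₂)) + (α₁ * b1 - β₁ * a1) * (α₁ * β₂ + α₂ * β₁) + 2 * ((α₁ * b2 - β₁ * a2) * (β₁ * β₂))) * ε))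
        = ε ^ 3 * (((β₂ * a0 - α₂ * b0) * α₂ ^ 2 + (β₂ * a1 - α₂ * b1) * (α₂ * β₂) + (β₂ * a2 - α₂ * b2) * β₂ ^ 2) * (((α₁ * b0 - β₁ * a0) * α₁ ^ 2 + (α₁ * b1 - β₁ * a1) * (α₁ * β₁) + (α₁ * b2 - β₁ * a2) * β₁ ^ 2) * ((β₂ * a0 - α₂ * b0) * α₂ ^ 2 + (β₂ * a1 - α₂ * b1) * (α₂ * β₂) + (β₂ * a2 - α₂ * b2) * β₂ ^ 2) - (2 * ((β₂ * a0 - α₂ * b0) * (α₁ * α₂)) + (β₂ * a1 - α₂ * b1) * (α₁ * β₂ + α₂ * β₁) + 2 * ((β₂ * a2 - α₂ * b2) * (β₁ * β₂))) * (2 * ((α₁ * b0 - β₁ * a0) * (α₁ * α₂)) + (α₁ * b1 - β₁ * a1) * (α₁ * β₂ + α₂ * β₁) + 2 * ((α₁ * b2 - β₁ * a2) * (β₁ * β₂))))) := by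
      linear_combination (-(ε ^ 2 * ((β₂ * a0 - α₂ * b0) * α₂ ^ 2 + (β₂ * a1 - α₂ * b1) * (α₂ * β₂) + (β₂ * a2 - α₂ * b2) * β₂ ^ 2) ^ 2)) * hε
    rw [hb]
    exact (hεu.pow 3).mul (hE2.mul hQ)
  intro x y
  have ex1 : algebraMap O K β₂ *
        qform (algebraMap O K a0) (algebraMap O K a1) (algebraMap O K a2)
          (algebraMap O K α₁ * x + algebraMap O K α₂ * y)
          (algebraMap O K β₁ * x + algebraMap O K β₂ * y)
      - algebraMap O K α₂ *
        qform (algebraMap O K b0) (algebraMap O K b1) (algebraMap O K b2)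
          (algebraMap O K α₁ * x + algebraMap O K α₂ * y)
          (algebraMap O K β₁ * x + algebraMap O K β₂ * y)
      = algebraMap O K ((β₂ * a0 - α₂ * b0) * α₁ ^ 2 + (β₂ * a1 - α₂ * b1) * (α₁ * β₁) + (β₂ * a2 - α₂ * b2) * β₁ ^ 2) * x ^ 2 + algebraMap O K (2 * ((β₂ * a0 - α₂ * b0) * (α₁ * α₂)) + (β₂ * a1 - α₂ * b1) * (α₁ * β₂ + α₂ * β₁) + 2 * ((β₂ * a2 - α₂ * b2) * (β₁ * β₂))) * (x * y)
        + algebraMap O K ((β₂ * a0 - α₂ * b0) * α₂ ^ 2 + (β₂ * a1 - α₂ * b1) * (α₂ * β₂) + (β₂ * a2 - α₂ * b2) * β₂ ^ 2) * y ^ 2 := by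
    simp only [qform, map_add, map_sub, map_mul, map_pow, map_ofNat]
    ring
  have ex2 : algebraMap O K α₁ *
        qform (algebraMap O K b0) (algebraMap O K b1) (algebraMap O K b2)
          (algebraMap O K α₁ * x + algebraMap O K α₂ * y)
          (algebraMap O K β₁ * x + algebraMap O K β₂ * y)
      - algebraMap O K β₁ *
        qform (algebraMap O K a0) (algebraMap O K a1) (algebraMap O K a2)
          (algebraMap O K α₁ * x + algebraMap O K α₂ * y)
          (algebraMap O K β₁ * x + algebraMap O K β₂ * y)
      = algebraMap O K ((α₁ * b0 - β₁ * a0) * α₁ ^ 2 + (α₁ * b1 - β₁ * a1) * (α₁ * β₁) + (α₁ * b2 - β₁ * a2) * β₁ ^ 2) * x ^ 2 + algebraMap O K (2 * ((α₁ * b0 - β₁ * a0) * (α₁ * α₂)) + (α₁ * b1 - β₁ * a1) * (α₁ * β₂ + α₂ * β₁) + 2 * ((α₁ * b2 - β₁ * a2) * (β₁ * β₂))) * (x * y)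
        + algebraMap O K ((α₁ * b0 - β₁ * a0) * α₂ ^ 2 + (α₁ * b1 - β₁ * a1) * (α₂ * β₂) + (α₁ * b2 - β₁ * a2) * β₂ ^ 2) * y ^ 2 := by
    simp only [qform, map_add, map_sub, map_mul, map_pow, map_ofNat]
    ring
  constructor
  · rw [ex1, hg1, map_zero]
    rw [div_eq_iff hd0, map_mul, map_mul]
    linear_combination (-((algebraMap O K (2 * ((β₂ * a0 - α₂ * b0) * (α₁ * α₂)) + (β₂ * a1 - α₂ * b1) * (α₁ * β₂ + α₂ * β₁) + 2 * ((β₂ * a2 - α₂ * b2) * (β₁ * β₂)))) * (x * y) + (algebraMap O K ((β₂ * a0 - α₂ * b0) * α₂ ^ 2 + (β₂ * a1 - α₂ * b1) * (α₂ * β₂) + (β₂ * a2 - α₂ * b2) * β₂ ^ 2)) * y ^ 2)) * hεK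
      + (-(((algebraMap O K (2 * ((β₂ * a0 - α₂ * b0) * (α₁ * α₂)) + (β₂ * a1 - α₂ * b1) * (α₁ * β₂ + α₂ * β₁) + 2 * ((β₂ * a2 - α₂ * b2) * (β₁ * β₂)))) * (x * y) + (algebraMap O K ((β₂ * a0 - α₂ * b0) * α₂ ^ 2 + (β₂ * a1 - α₂ * b1) * (α₂ * β₂) + (β₂ * a2 - α₂ * b2) * β₂ ^ 2)) * y ^ 2)
          * (algebraMap O K ((α₁ * b0 - β₁ * a0) * α₁ ^ 2 + (α₁ * b1 - β₁ * a1) * (α₁ * β₁) + (α₁ * b2 - β₁ * a2) * β₁ ^ 2)) * (algebraMap O K ε))) * hinvK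
  · rw [ex2, hg2, map_zero]
    rw [div_eq_iff hd0, map_mul]
    linear_combination (-((algebraMap O K (2 * ((α₁ * b0 - β₁ * a0) * (α₁ * α₂)) + (α₁ * b1 - β₁ * a1) * (α₁ * β₂ + α₂ * β₁) + 2 * ((α₁ * b2 - β₁ * a2) * (β₁ * β₂)))) * (x * y))) * hεK
      + (-((algebraMap O K ((α₁ * b0 - β₁ * a0) * α₁ ^ 2 + (α₁ * b1 - β₁ * a1) * (α₁ * β₁) + (α₁ * b2 - β₁ * a2) * β₁ ^ 2)) * x ^ 2)
         - (algebraMap O K (2 * ((α₁ * b0 - β₁ * a0) * (α₁ * α₂)) + (α₁ * b1 - β₁ * a1) * (α₁ * β₂ + α₂ * β₁) + 2 * ((α₁ * b2 - β₁ * a2) * (β₁ * β₂)))) * (x * y) * (algebraMap O K ((α₁ * b0 - β₁ * a0) * α₁ ^ 2 + (α₁ * b1 - β₁ * a1) * (α₁ * β₁) + (α₁ * b2 - β₁ * a2) * β₁ ^ 2)) * (algebraMap O K ε)) * hinvK
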